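/- arXiv:1412.0764 — 3 statements merged into one kernel-verified Lean document; each statement's English description precedes it below -/
import Mathlib

section
/- Let f: M → M be a C¹ diffeomorphism of a compact Riemannian manifold and let μ be an f-invariant Borel probability measure. Let Γ ⊆ M be a measurable set with μ(Γ) > 0 and set Ω = ∪_{n∈ℤ} f^n(Γ). Fix γ > 0. Then there exists a measurable function N₀: Ω → ℕ such that for μ-almost every x ∈ Ω, every n ≥ N₀(x), and every t ∈ [0,1], there is some l ∈ {0,1,…,n} with f^l(x) ∈ Γ and |(l/n) − t| < γ. -/
open MeasureTheory Filter Set Manifold ProbabilityTheory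

def IsC1Diffeo {E : Type*} [NormedAddCommGroup E] [NormedSpace ℝ E]
    {H : Type*} [TopologicalSpace H] (I : ModelWithCorners ℝ E H)
    {M : Type*} [TopologicalSpace M] [ChartedSpace H M] (f : Equiv.Perm M) : Prop :=
  ContMDiff I I 1 f ∧ ContMDiff I I 1 f.symm

/-!
Let `A m ⊆ Γ` be the set of points of `Γ` that do not come back to `Γ` within `m` steps.
Invariance of `μ` gives `∑ μ (A m) ≤ 1`, hence `∑ₗ μ (f^[l] ⁻¹' A (l / K)) = K ∑ μ (A m) < ∞`,
and by Borel–Cantelli, for a.e. `x` every late visit `l` of the orbit of `x` to `Γ` is followed by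
another one within `l / K` steps. By Poincaré recurrence a.e. point of `Ω` makes such a late visit,
so from then on the gaps between its visits before time `n` are at most `n / K`, and the ratios
`l / n` of visit times are `γ`-dense in `[0, 1]` as soon as `K > 1 / γ` and `n` is large.
`N₀ x` is the first time from which this holds; it is measurable because for fixed `n` the density
condition involves only the finitely many events `f^[l] x ∈ Γ`, `l ≤ n`.
-/

theorem Nat.frequently_atTop_succ_iff {p : ℕ → Prop} :
    (∃ᶠ m in atTop, p (m + 1)) ↔ ∃ᶠ m in atTop, p m := by
  conv_rhs => rw [← map_add_atTop_eq_nat 1]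
  rfl

theorem ENNReal.tsum_comp_div (g : ℕ → ENNReal) (K : ℕ) [NeZero K] :
    ∑' l, g (l / K) = K * ∑' m, g m :=
  calc ∑' l, g (l / K) = ∑' p : ℕ × Fin K, g p.1 := (Nat.divModEquiv K).tsum_eq (fun p => g p.1)
    _ = ∑' m, ∑' _ : Fin K, g m := ENNReal.tsum_prod (f := fun m _ => g m)
    _ = K * ∑' m, g m := by simp [ENNReal.tsum_mul_left]

namespace Function

variable {α : Type*} {f : α → α} {s : Set α}

/-- `x ∈ avoidUpTo f s m` iff `f^[j] x ∉ s` for `1 ≤ j ≤ m`. -/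
def avoidUpTo (f : α → α) (s : Set α) : ℕ → Set α
  | 0 => univ
  | m + 1 => f ⁻¹' (avoidUpTo f s m \ s)

theorem exists_iterate_mem_of_notMem_avoidUpTo {m : ℕ} {x : α} (hx : x ∉ avoidUpTo f s m) :
    ∃ j, 0 < j ∧ j ≤ m ∧ f^[j] x ∈ s := by
  induction m generalizing x with
  | zero => exact absurd (mem_univ x) hx
  | succ m ih =>
    by_cases hfx : f x ∈ s
    · exact ⟨1, one_pos, by omega, hfx⟩
    · obtain ⟨j, -, hjm, hj⟩ := ih fun h => hx ⟨h, hfx⟩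
      exact ⟨j + 1, j.succ_pos, by omega, hj⟩

variable [MeasurableSpace α] {μ : Measure α}

theorem measurableSet_avoidUpTo (hf : Measurable f) (hs : MeasurableSet s) (m : ℕ) :
    MeasurableSet (avoidUpTo f s m) := by
  induction m with
  | zero => exact .univ
  | succ m ih => exact hf (ih.diff hs)

theorem measure_avoidUpTo_eq_add (hf : MeasurePreserving f μ μ) (hs : MeasurableSet s) (m : ℕ) :
    μ (avoidUpTo f s m) = μ (s ∩ avoidUpTo f s m) + μ (avoidUpTo f s (m + 1)) := by
  have hm := measurableSet_avoidUpTo hf.measurable hs m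
  rw [avoidUpTo, hf.measure_preimage (hm.diff hs).nullMeasurableSet, inter_comm,
    measure_inter_add_sdiff _ hs]

theorem sum_measure_inter_avoidUpTo_add (hf : MeasurePreserving f μ μ) (hs : MeasurableSet s)
    (N : ℕ) :
    ∑ m ∈ Finset.range N, μ (s ∩ avoidUpTo f s m) + μ (avoidUpTo f s N) = μ univ := by
  induction N with
  | zero => simp [avoidUpTo]
  | succ N ih => rw [Finset.sum_range_succ, add_assoc, ← measure_avoidUpTo_eq_add hf hs, ih]

theorem tsum_measure_inter_avoidUpTo_le (hf : MeasurePreserving f μ μ) (hs : MeasurableSet s) :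
    ∑' m, μ (s ∩ avoidUpTo f s m) ≤ μ univ :=
  ENNReal.tsum_le_of_sum_range_le fun N =>
    sum_measure_inter_avoidUpTo_add hf hs N ▸ le_self_add

end Function

theorem Equiv.Perm.zpow_apply_mem_iff {α : Type*} {f : Equiv.Perm α} {R : Set α}
    (hR : ∀ x, f x ∈ R ↔ x ∈ R) (n : ℤ) (x : α) : (f ^ n) x ∈ R ↔ x ∈ R := by
  induction n using Int.induction_on generalizing x with
  | zero => rfl
  | succ n ih => rw [zpow_add_one, Equiv.Perm.mul_apply, ih, hR]
  | pred n ih =>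
    rw [zpow_sub_one, Equiv.Perm.mul_apply, ih, Equiv.Perm.inv_def, ← hR, Equiv.apply_symm_apply]

namespace MeasureTheory.MeasurePreserving

variable {α : Type*} [MeasurableSpace α] {μ : Measure α} {s : Set α}

open Function in
theorem ae_eventually_exists_iterate_mem_Ioc [IsFiniteMeasure μ] {f : α → α}
    (hf : MeasurePreserving f μ μ) (hs : MeasurableSet s) (K : ℕ) [NeZero K] :
    ∀ᵐ x ∂μ, ∀ᶠ l in atTop, f^[l] x ∈ s → ∃ l' ∈ Ioc l (l + l / K), f^[l'] x ∈ s := by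
  have hsum : ∑' l, μ (f^[l] ⁻¹' (s ∩ avoidUpTo f s (l / K))) ≠ ⊤ := by
    rw [tsum_congr fun l => (hf.iterate l).measure_preimage
        (hs.inter (measurableSet_avoidUpTo hf.measurable hs _)).nullMeasurableSet,
      ENNReal.tsum_comp_div (fun m => μ (s ∩ avoidUpTo f s m))]
    exact ENNReal.mul_ne_top (ENNReal.natCast_ne_top K)
      (ne_top_of_le_ne_top (measure_ne_top μ univ) (tsum_measure_inter_avoidUpTo_le hf hs))
  filter_upwards [ae_eventually_notMem hsum] with x hx
  refine hx.mono fun l hl hmem => ?_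
  obtain ⟨j, hj0, hjK, hj⟩ := exists_iterate_mem_of_notMem_avoidUpTo fun h => hl ⟨hmem, h⟩
  exact ⟨j + l, ⟨by omega, by omega⟩, by rwa [iterate_add_apply]⟩

theorem perm_zpow {f : Equiv.Perm α} (hf : MeasurePreserving f μ μ) (hf' : Measurable f.symm)
    (n : ℤ) : MeasurePreserving ⇑(f ^ n) μ μ := by
  have hsymm : MeasurePreserving f.symm μ μ := hf.symm ⟨f, hf.measurable, hf'⟩
  induction n using Int.induction_on with
  | zero => exact .id μ
  | succ n ih =>
    rw [zpow_add_one, Equiv.Perm.coe_mul]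
    exact ih.comp hf
  | pred n ih =>
    rw [zpow_sub_one, Equiv.Perm.coe_mul, Equiv.Perm.inv_def]
    exact ih.comp hsymm

theorem ae_frequently_iterate_mem_of_mem_iUnion_zpow_image [IsFiniteMeasure μ]
    {f : Equiv.Perm α} (hf : MeasurePreserving f μ μ) (hf' : Measurable f.symm)
    (hs : MeasurableSet s) :
    ∀ᵐ x ∂μ, x ∈ ⋃ n : ℤ, (f ^ n) '' s → ∃ᶠ m in atTop, f^[m] x ∈ s := by
  set R := {x | ∃ᶠ m in atTop, f^[m] x ∈ s}
  have hR : ∀ x, f x ∈ R ↔ x ∈ R := fun x => by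
    simp only [R, mem_ofPred_eq, ← Function.iterate_succ_apply]
    exact Nat.frequently_atTop_succ_iff (p := fun m => f^[m] x ∈ s)
  have hrec : ∀ᵐ x ∂μ, x ∈ s → x ∈ R :=
    hf.conservative.ae_mem_imp_frequently_image_mem hs.nullMeasurableSet
  simp only [mem_iUnion, forall_exists_index, ae_all_iff]
  intro n
  filter_upwards [(hf.perm_zpow hf' (-n)).quasiMeasurePreserving.ae hrec] with x hx hxs
  rw [Equiv.image_eq_preimage_symm, mem_preimage, ← Equiv.Perm.inv_def, ← zpow_neg] at hxs
  exact (Equiv.Perm.zpow_apply_mem_iff hR (-n) x).1 (hx hxs)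

end MeasureTheory.MeasurePreserving

theorem Nat.exists_mem_Icc_le_add_div {p : ℕ → Prop} {L K : ℕ} (hL : p L)
    (hgap : ∀ l ≥ L, p l → ∃ l' ∈ Ioc l (l + l / K), p l') {s : ℕ} (hs : L ≤ s) :
    ∃ l ∈ Icc L s, s ≤ l + l / K ∧ p l := by
  induction s, hs using Nat.le_induction with
  | base => exact ⟨L, ⟨le_rfl, le_rfl⟩, le_self_add, hL⟩
  | succ s hs ih =>
    obtain ⟨l, ⟨hLl, hls⟩, hsl, hl⟩ := ih
    by_cases hnext : s + 1 ≤ l + l / K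
    · exact ⟨l, ⟨hLl, by omega⟩, hnext, hl⟩
    · obtain ⟨l', ⟨hll', hl'⟩, hpl'⟩ := hgap l hLl hl
      have : l / K ≤ l' / K := Nat.div_le_div_right hll'.le
      exact ⟨l', ⟨by omega, by omega⟩, by omega, hpl'⟩

theorem Nat.exists_abs_div_sub_lt {p : ℕ → Prop} {L K n : ℕ} {γ t : ℝ} (hL : p L)
    (hgap : ∀ l ≥ L, p l → ∃ l' ∈ Ioc l (l + l / K), p l') (hLn : L ≤ n)
    (hn : L + 1 < (γ - (K : ℝ)⁻¹) * n) (ht : t ∈ Icc (0 : ℝ) 1) :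
    ∃ l ≤ n, p l ∧ |(l : ℝ) / n - t| < γ := by
  obtain ⟨ht0, ht1⟩ := ht
  have htn : 0 ≤ t * n := by positivity
  have hn0 : (0 : ℝ) < n := Nat.cast_pos.2 <| Nat.pos_of_ne_zero <| by
    rintro rfl
    norm_num at hn
    linarith
  obtain ⟨l, ⟨-, hls⟩, hsl, hl⟩ := exists_mem_Icc_le_add_div hL hgap (le_max_left L ⌊t * n⌋₊)
  have hln : l ≤ n := hls.trans (max_le hLn (Nat.floor_le_of_le (by nlinarith)))
  have hupper : (l : ℝ) < (t + γ) * n := by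
    have : (l : ℝ) ≤ L + t * n := (Nat.cast_le.2 hls).trans <| by
      rw [Nat.cast_max]
      exact max_le (by linarith) (by linarith [Nat.floor_le htn])
    nlinarith [show (0 : ℝ) ≤ (K : ℝ)⁻¹ * n by positivity]
  have hlower : (t - γ) * n < l := by
    have hfloor : t * n < ⌊t * n⌋₊ + 1 := Nat.lt_floor_add_one _
    have hmax : (⌊t * n⌋₊ : ℝ) ≤ ((max L ⌊t * n⌋₊ : ℕ) : ℝ) := by
      exact_mod_cast le_max_right _ _
    have hsl' : ((max L ⌊t * n⌋₊ : ℕ) : ℝ) ≤ l + ((l / K : ℕ) : ℝ) := by exact_mod_cast hsl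
    have hdiv : ((l / K : ℕ) : ℝ) ≤ (K : ℝ)⁻¹ * n :=
      calc ((l / K : ℕ) : ℝ) ≤ (l : ℝ) / K := Nat.cast_div_le
        _ ≤ n / K := by gcongr
        _ = (K : ℝ)⁻¹ * n := by ring
    nlinarith [Nat.cast_nonneg (α := ℝ) L]
  refine ⟨l, hln, hl, abs_sub_lt_iff.2 ⟨?_, ?_⟩⟩
  · rw [sub_lt_iff_lt_add', div_lt_iff₀ hn0]
    linarith
  · rw [sub_lt_comm, lt_div_iff₀ hn0]
    linarith

theorem Nat.eventually_forall_exists_abs_div_sub_lt {p : ℕ → Prop} {L K : ℕ} {γ : ℝ}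
    (hL : p L) (hgap : ∀ l ≥ L, p l → ∃ l' ∈ Ioc l (l + l / K), p l') (hK : (K : ℝ)⁻¹ < γ) :
    ∀ᶠ n in atTop, ∀ t ∈ Icc (0 : ℝ) 1, ∃ l ≤ n, p l ∧ |(l : ℝ) / n - t| < γ := by
  have hlin : Tendsto (fun n : ℕ => (γ - (K : ℝ)⁻¹) * n) atTop atTop :=
    tendsto_natCast_atTop_atTop.const_mul_atTop (sub_pos.2 hK)
  filter_upwards [eventually_ge_atTop L, hlin.eventually_gt_atTop (L + 1)] with n hLn hn t ht
  exact exists_abs_div_sub_lt hL hgap hLn hn ht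

theorem MeasurableSet.setOf_forall_mem_exists_finset {α ι β : Type*} [MeasurableSpace α]
    (I : Set ι) (s : Finset β) (p : ι → β → Prop) {A : β → Set α}
    (hA : ∀ b, MeasurableSet (A b)) :
    MeasurableSet {x | ∀ i ∈ I, ∃ b ∈ s, x ∈ A b ∧ p i b} := by
  classical
  -- the union over `b` depends on `i` only through the finite set `s.filter (p i)`
  have hfin : ((fun i => s.filter (p i)) '' I).Finite :=
    s.powerset.finite_toSet.subset <| by
      rintro _ ⟨i, -, rfl⟩
      exact Finset.mem_powerset.2 (Finset.filter_subset _ _)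
  have := hfin.measurableSet_biInter fun u _ => u.measurableSet_biUnion fun b _ => hA b
  rw [biInter_image] at this
  convert this using 1
  ext x
  simp only [mem_ofPred_eq, mem_iInter₂, mem_iUnion₂, Finset.mem_filter, exists_prop, and_assoc]
  exact forall₂_congr fun _ _ => exists_congr fun _ => and_congr_right' and_comm

theorem measurable_sInf_setOf_mem {α : Type*} [MeasurableSpace α] {G : ℕ → Set α}
    (hG : ∀ N, MeasurableSet (G N)) : Measurable fun x => sInf {N | x ∈ G N} := by
  classical
  have hp : ∀ x, ∃ N, x ∈ G N ∨ x ∉ ⋃ N, G N := fun x => by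
    by_cases hx : x ∈ ⋃ N, G N
    · exact (mem_iUnion.1 hx).imp fun _ => Or.inl
    · exact ⟨0, Or.inr hx⟩
  convert measurable_find hp fun N => (hG N).union (MeasurableSet.iUnion hG).compl with x
  trans sInf {N | x ∈ G N ∨ x ∉ ⋃ N, G N}
  · by_cases hx : x ∈ ⋃ N, G N
    · simp [hx]
    · simp_all
  · exact ((Nat.find_eq_iff (hp x)).2 ⟨Nat.sInf_mem (hp x), fun _ => Nat.notMem_of_lt_sInf⟩).symm

variable {E : Type*} [NormedAddCommGroup E] [NormedSpace ℝ E]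
  {H : Type*} [TopologicalSpace H] (I : ModelWithCorners ℝ E H)
  {M : Type*} [MetricSpace M] [ChartedSpace H M]

theorem return_time_density
    [MeasurableSpace M] [BorelSpace M]
    (f : Equiv.Perm M) (hf : IsC1Diffeo I f)
    (μ : Measure M) [IsProbabilityMeasure μ] (hμ : MeasurePreserving f μ μ)
    (Γ : Set M) (hΓm : MeasurableSet Γ)
    (γ : ℝ) (hγ : 0 < γ) :
    ∃ N₀ : M → ℕ, Measurable N₀ ∧
      ∀ᵐ x ∂μ, x ∈ ⋃ n : ℤ, (f ^ n) '' Γ →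
        ∀ n : ℕ, N₀ x ≤ n → ∀ t ∈ Set.Icc (0:ℝ) 1,
          ∃ l : ℕ, l ≤ n ∧ f^[l] x ∈ Γ ∧ |(l : ℝ) / n - t| < γ := by
  set D : ℕ → Set M := fun n =>
    {x | ∀ t ∈ Icc (0 : ℝ) 1, ∃ l ≤ n, f^[l] x ∈ Γ ∧ |(l : ℝ) / n - t| < γ}
  have hD : ∀ n, MeasurableSet (D n) := fun n => by
    simpa only [Finset.mem_Iic, mem_preimage] using
      MeasurableSet.setOf_forall_mem_exists_finset (Icc 0 1) (Finset.Iic n)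
        (fun t l => |(l : ℝ) / n - t| < γ) fun l => hμ.measurable.iterate l hΓm
  refine ⟨fun x => sInf {N | x ∈ ⋂ n ≥ N, D n},
    measurable_sInf_setOf_mem fun N => .iInter fun n => .iInter fun _ => hD n, ?_⟩
  set K := ⌊γ⁻¹⌋₊ + 1
  have hK : (K : ℝ)⁻¹ < γ := inv_lt_of_inv_lt₀ hγ (by exact_mod_cast Nat.lt_floor_add_one γ⁻¹)
  filter_upwards [hμ.ae_eventually_exists_iterate_mem_Ioc hΓm K,
    hμ.ae_frequently_iterate_mem_of_mem_iUnion_zpow_image hf.2.continuous.measurable hΓm]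
    with x hgap hrec hxΩ
  obtain ⟨L₀, hL₀⟩ := eventually_atTop.1 hgap
  obtain ⟨L, hL₀L, hL⟩ := frequently_atTop.1 (hrec hxΩ) L₀
  obtain ⟨N, hN⟩ := eventually_atTop.1 <|
    Nat.eventually_forall_exists_abs_div_sub_lt hL (fun l hl => hL₀ l (hL₀L.trans hl)) hK
  exact mem_iInter₂.1 (Nat.sInf_mem (s := {N | x ∈ ⋂ n ≥ N, D n}) ⟨N, mem_iInter₂.2 hN⟩)
end

section
/- Let f: M → M be a C¹ diffeomorphism of a compact Riemannian manifold, μ an ergodic f-invariant Borel probability measure, B ⊆ M a measurable set with μ(B) > 0, and ξ a finite Borel partition of M refining {B, M∖B}. Let φ, ψ: M → ℝ be continuous, and fix γ > 0 and δ > 0. For n ∈ ℕ define Λ₁ⁿ = {x ∈ B : f^q(x) ∈ ξ(x) for some integer q ∈ [n,(1+γ)n]} and Λ₂ⁿ = {x ∈ B : S_mψ(x) ≤ m(∫ψ dμ + γ) and S_mφ(x) ≥ m(∫φ dμ − δ) for all m ≥ n}, where ξ(x) denotes the element of ξ containing x. Then lim_{n→∞} μ(Λ₁ⁿ ∩ Λ₂ⁿ)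 = μ(B). -/
open MeasureTheory Filter Set Manifold ProbabilityTheory

noncomputable section

/-- Birkhoff sum `S_n φ(x) = ∑_{i<n} φ(f^i x)`. -/
def birkhoffSumS {M : Type*} (f : M → M) (φ : M → ℝ) (n : ℕ) (x : M) : ℝ :=
  ∑ i ∈ Finset.range n, φ (f^[i] x)

/-- Bowen ball `B_n(x, ε) = {y : d(f^i x, f^i y) < ε for all 0 ≤ i ≤ n-1}`. -/
def bowenBall {M : Type*} [PseudoMetricSpace M] (f : M → M) (n : ℕ) (ε : ℝ) (x : M) : Set M :=
  {y | ∀ i < n, dist (f^[i] x) (f^[i] y) < ε}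

/-!
Everything follows from the pointwise ergodic theorem for bounded functions, proved here by the
Katznelson–Weiss argument. The set where `limsup S_n g / n ≥ r` is `f`-invariant, hence null or
conull; for `r > ∫ g` it cannot be conull, since cutting orbits greedily into blocks of average
close to `r` and integrating would give `r ≤ ∫ g`. Applied to the indicator of the partition
element `A ∋ x`, the number of visits to `A` grows like `n μ(A)`, so it increases across the
window `[n, (1 + γ) n]` once `n` is large. Thus almost every point of `B` eventually lies in
`Λ₁ⁿ ∩ Λ₂ⁿ ⊆ B`, which forces `μ(Λ₁ⁿ ∩ Λ₂ⁿ) → μ(B)`.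
-/

open Topology

section BirkhoffSum

variable {α : Type*} {f : α → α} {g : α → ℝ}

theorem birkhoffSum_mono {g' : α → ℝ} (h : ∀ x, g x ≤ g' x) (n : ℕ) (x : α) :
    birkhoffSum f g n x ≤ birkhoffSum f g' n x :=
  Finset.sum_le_sum fun _ _ ↦ h _

theorem natCast_mul_le_birkhoffSum {C : ℝ} (hC : ∀ x, C ≤ g x) (n : ℕ) (x : α) :
    n * C ≤ birkhoffSum f g n x := by
  simpa [birkhoffSum] using birkhoffSum_mono (f := f) hC n x

/-- Cut the orbit segment greedily into blocks; only the last, incomplete one is not good. -/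
theorem mul_sub_le_birkhoffSum_of_forall_exists {C c : ℝ} {N : ℕ} (hC : ∀ x, C ≤ g x)
    (h : ∀ x, ∃ n, 0 < n ∧ n ≤ N ∧ n * c ≤ birkhoffSum f g n x) (L : ℕ) (x : α) :
    L * c - N * (|c| + |C|) ≤ birkhoffSum f g L x := by
  induction L using Nat.strong_induction_on generalizing x with
  | _ L ih =>
  obtain ⟨n, hn, hnN, hblock⟩ := h x
  rcases le_or_gt n L with hnL | hLn
  · obtain ⟨m, rfl⟩ := Nat.exists_eq_add_of_le hnL
    have hrest := ih m (by omega) (f^[n] x)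
    rw [birkhoffSum_add]
    push_cast
    linarith
  · have hLN : (L : ℝ) ≤ N := by exact_mod_cast (hLn.trans_le hnN).le
    have hlow := natCast_mul_le_birkhoffSum (f := f) hC L x
    nlinarith [le_abs_self c, neg_abs_le C, abs_nonneg c, abs_nonneg C,
      mul_le_mul_of_nonneg_right hLN (by positivity : 0 ≤ |c| + |C|)]

theorem exists_iterate_mem_of_birkhoffSum_indicator_pos {A : Set α} {n : ℕ} {x : α}
    (h : 0 < birkhoffSum f (A.indicator (1 : α → ℝ)) n x) : ∃ k < n, f^[k] x ∈ A := by
  by_contra! hnot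
  refine h.ne' (Finset.sum_eq_zero fun k hk ↦ ?_)
  exact indicator_of_notMem (hnot k (Finset.mem_range.1 hk)) _

theorem frequently_mul_lt_birkhoffSum_apply {r r' : ℝ} (hr : r' < r) {x : α}
    (hx : ∃ᶠ n in atTop, n * r < birkhoffSum f g n x) :
    ∃ᶠ n in atTop, n * r' < birkhoffSum f g n (f x) := by
  rw [← map_add_atTop_eq_nat 1, frequently_map] at hx
  have hlarge : ∀ᶠ n : ℕ in atTop, g x - r ≤ n * (r - r') :=
    (tendsto_natCast_atTop_atTop.atTop_mul_const (sub_pos.2 hr)).eventually_ge_atTop _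
  refine hx.mp (hlarge.mono fun n hn hlt ↦ ?_)
  rw [birkhoffSum_succ'] at hlt
  push_cast at hlt
  linarith

theorem frequently_mul_lt_birkhoffSum_of_apply {r r' : ℝ} (hr : r' < r) {x : α}
    (hx : ∃ᶠ n in atTop, n * r < birkhoffSum f g n (f x)) :
    ∃ᶠ n in atTop, n * r' < birkhoffSum f g n x := by
  rw [← map_add_atTop_eq_nat 1, frequently_map]
  have hlarge : ∀ᶠ n : ℕ in atTop, r' - g x ≤ n * (r - r') :=
    (tendsto_natCast_atTop_atTop.atTop_mul_const (sub_pos.2 hr)).eventually_ge_atTop _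
  refine hx.mp (hlarge.mono fun n hn hlt ↦ ?_)
  rw [birkhoffSum_succ']
  push_cast
  linarith

/-- The set where `limsup S_n g / n ≥ r`, written with rational thresholds so that it is
measurable. -/
def birkhoffLimsupSuperlevel (f : α → α) (g : α → ℝ) (r : ℝ) : Set α :=
  {x | ∀ q : ℚ, (q : ℝ) < r → ∃ᶠ n in atTop, n * (q : ℝ) < birkhoffSum f g n x}

theorem preimage_birkhoffLimsupSuperlevel (r : ℝ) :
    f ⁻¹' birkhoffLimsupSuperlevel f g r = birkhoffLimsupSuperlevel f g r := by
  ext x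
  constructor
  · intro hx q hq
    obtain ⟨q', hqq', hq'r⟩ := exists_rat_btwn hq
    exact frequently_mul_lt_birkhoffSum_of_apply (by exact_mod_cast hqq') (hx q' hq'r)
  · intro hx q hq
    obtain ⟨q', hqq', hq'r⟩ := exists_rat_btwn hq
    exact frequently_mul_lt_birkhoffSum_apply (by exact_mod_cast hqq') (hx q' hq'r)

end BirkhoffSum

theorem le_of_forall_natCast_mul_sub_le {a c B : ℝ} (h : ∀ L : ℕ, L * c - B ≤ L * a) :
    c ≤ a := by
  by_contra! hac
  obtain ⟨L, hL⟩ := exists_nat_gt (B / (c - a))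
  rw [div_lt_iff₀ (sub_pos.2 hac)] at hL
  linarith [h L]

section Measurable

variable {α : Type*} [MeasurableSpace α] {f : α → α} {g : α → ℝ}

theorem measurable_birkhoffSum (hf : Measurable f) (hg : Measurable g) (n : ℕ) :
    Measurable (birkhoffSum f g n) :=
  Finset.measurable_sum _ fun k _ ↦ hg.comp (hf.iterate k)

theorem measurableSet_birkhoffLimsupSuperlevel (hf : Measurable f) (hg : Measurable g) (r : ℝ) :
    MeasurableSet (birkhoffLimsupSuperlevel f g r) := by
  simp only [birkhoffLimsupSuperlevel, frequently_atTop]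
  exact measurableSet_setOfPred.2 <| Measurable.forall fun q ↦ measurable_const.imp <|
    Measurable.forall fun N ↦ Measurable.exists fun n ↦ measurable_const.and <|
      measurableSet_setOfPred.1 <|
        measurableSet_lt measurable_const (measurable_birkhoffSum hf hg n)

end Measurable

namespace MeasureTheory.MeasurePreserving

variable {α : Type*} [MeasurableSpace α] {μ : Measure α} {f : α → α} {g : α → ℝ}

theorem integrable_birkhoffSum (hf : MeasurePreserving f μ μ)
    (hg : Integrable g μ) (n : ℕ) : Integrable (birkhoffSum f g n) μ :=
  integrable_finsetSum _ fun k _ ↦ (hf.iterate k).integrable_comp_of_integrable hg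

theorem integral_birkhoffSum (hf : MeasurePreserving f μ μ)
    (hg : Integrable g μ) (n : ℕ) : ∫ x, birkhoffSum f g n x ∂μ = n * ∫ x, g x ∂μ := by
  have hiter : ∀ k, ∫ x, g (f^[k] x) ∂μ = ∫ x, g x ∂μ := fun k ↦ by
    conv_rhs => rw [← (hf.iterate k).map_eq]
    refine (integral_map (hf.iterate k).aemeasurable ?_).symm
    rw [(hf.iterate k).map_eq]
    exact hg.aestronglyMeasurable
  simp only [birkhoffSum]
  rw [integral_finsetSum (f := fun k x ↦ g (f^[k] x)) _ fun k _ ↦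
    (hf.iterate k).integrable_comp_of_integrable hg]
  simp [hiter]

/-- Outside the exceptional set `E` the greedy block decomposition applies; on `E` we raise `g`
by a constant large enough that single steps are good blocks, at a cost of order `μ E`. -/
theorem le_integral_add_measureReal [IsProbabilityMeasure μ]
    (hf : MeasurePreserving f μ μ) (hg : Integrable g μ) {C c : ℝ} (hC : ∀ x, C ≤ g x)
    {E : Set α} (hE : MeasurableSet E) {N : ℕ} (hN : 0 < N)
    (h : ∀ x ∉ E, ∃ n, 0 < n ∧ n ≤ N ∧ n * c ≤ birkhoffSum f g n x) :
    c ≤ ∫ x, g x ∂μ + (|c| + |C|) * μ.real E := by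
  set K := |c| + |C|
  set g' := g + E.indicator fun _ ↦ K
  have hK : 0 ≤ K := by positivity
  have hgg' : ∀ x, g x ≤ g' x := fun x ↦
    le_add_of_nonneg_right (indicator_nonneg (fun _ _ ↦ hK) x)
  have hg'C : ∀ x, C ≤ g' x := fun x ↦ (hC x).trans (hgg' x)
  have hg'i : Integrable g' μ := hg.add ((integrable_const K).indicator hE)
  have hblocks : ∀ x, ∃ n, 0 < n ∧ n ≤ N ∧ n * c ≤ birkhoffSum f g' n x := by
    intro x
    by_cases hx : x ∈ E
    · refine ⟨1, one_pos, hN, ?_⟩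
      have hgood : c ≤ g x + K := by linarith [hC x, le_abs_self c, neg_abs_le C]
      simpa [g', hx] using hgood
    · obtain ⟨n, hn, hnN, hblock⟩ := h x hx
      exact ⟨n, hn, hnN, hblock.trans (birkhoffSum_mono hgg' n x)⟩
  have hint : ∫ x, g' x ∂μ = ∫ x, g x ∂μ + K * μ.real E := by
    change ∫ x, g x + E.indicator (fun _ ↦ K) x ∂μ = _
    rw [integral_add hg ((integrable_const K).indicator hE), integral_indicator_const K hE,
      smul_eq_mul, mul_comm]
  rw [← hint]
  refine le_of_forall_natCast_mul_sub_le (B := N * K) fun L ↦ ?_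
  rw [← hf.integral_birkhoffSum hg'i]
  calc L * c - N * K = ∫ _, (L * c - N * K) ∂μ := by simp
    _ ≤ ∫ x, birkhoffSum f g' L x ∂μ :=
      integral_mono (integrable_const _) (hf.integrable_birkhoffSum hg'i L)
        (mul_sub_le_birkhoffSum_of_forall_exists hg'C hblocks L)

/-- The points from which no good block of length at most `N` starts form a set of measure
tending to `0` as `N → ∞`. -/
theorem le_integral_of_ae_exists_birkhoffSum_ge [IsProbabilityMeasure μ]
    (hf : MeasurePreserving f μ μ) (hgm : Measurable g) (hg : Integrable g μ) {C c : ℝ}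
    (hC : ∀ x, C ≤ g x) (h : ∀ᵐ x ∂μ, ∃ n, 0 < n ∧ n * c ≤ birkhoffSum f g n x) :
    c ≤ ∫ x, g x ∂μ := by
  set E : ℕ → Set α := fun N ↦ {x | ∀ n, 0 < n → n ≤ N → birkhoffSum f g n x < n * c}
  have hEm : ∀ N, MeasurableSet (E N) := fun N ↦
    measurableSet_setOfPred.2 <| Measurable.forall fun n ↦ measurable_const.imp <|
      measurable_const.imp <| measurableSet_setOfPred.1 <|
        measurableSet_lt (measurable_birkhoffSum hf.measurable hgm n) measurable_const
  have hEanti : Antitone E := fun N N' hNN' x hx n hn hnN ↦ hx n hn (hnN.trans hNN')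
  have hEnull : μ (⋂ N, E N) = 0 := by
    refine measure_mono_null ?_ (ae_iff.1 h)
    rintro x hx ⟨n, hn, hblock⟩
    exact (mem_iInter.1 hx n n hn le_rfl).not_ge hblock
  have hEtendsto : Tendsto (fun N ↦ μ.real (E N)) atTop (𝓝 0) := by
    have hμE := tendsto_measure_iInter_atTop (fun N ↦ (hEm N).nullMeasurableSet) hEanti
      ⟨0, measure_ne_top μ _⟩
    rw [hEnull] at hμE
    exact (ENNReal.tendsto_toReal ENNReal.zero_ne_top).comp hμE
  have hlim := (hEtendsto.const_mul (|c| + |C|)).const_add (∫ x, g x ∂μ)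
  rw [mul_zero, add_zero] at hlim
  refine ge_of_tendsto hlim (eventually_atTop.2 ⟨1, fun N hN ↦ ?_⟩)
  refine hf.le_integral_add_measureReal hg hC (hEm N) hN fun x hx ↦ ?_
  simpa [E] using hx

end MeasureTheory.MeasurePreserving

namespace Ergodic

variable {α : Type*} [MeasurableSpace α] {μ : Measure α} [IsProbabilityMeasure μ] {f : α → α}
  {g : α → ℝ}

theorem ae_eventually_birkhoffSum_le (hf : Ergodic f μ) (hgm : Measurable g)
    (hg : Integrable g μ) (hbdd : BddBelow (range g)) {r : ℝ} (hr : ∫ x, g x ∂μ < r) :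
    ∀ᵐ x ∂μ, ∀ᶠ n in atTop, birkhoffSum f g n x ≤ n * r := by
  obtain ⟨C, hC⟩ := hbdd
  set S := birkhoffLimsupSuperlevel f g r
  have hSnull : μ S = 0 := by
    refine (hf.measure_self_or_compl_eq_zero
      (measurableSet_birkhoffLimsupSuperlevel hf.measurable hgm r)
      (preimage_birkhoffLimsupSuperlevel r)).resolve_right fun hSc ↦ ?_
    obtain ⟨q, hgq, hqr⟩ := exists_rat_btwn hr
    have hblocks : ∀ᵐ x ∂μ, ∃ n, 0 < n ∧ n * (q : ℝ) ≤ birkhoffSum f g n x := by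
      filter_upwards [measure_eq_zero_iff_ae_notMem.1 hSc] with x hx
      rw [mem_compl_iff, not_not] at hx
      obtain ⟨n, hlt, hn⟩ := ((hx q hqr).and_eventually (eventually_gt_atTop 0)).exists
      exact ⟨n, hn, hlt.le⟩
    exact hgq.not_ge (hf.toMeasurePreserving.le_integral_of_ae_exists_birkhoffSum_ge hgm hg
      (fun x ↦ hC (mem_range_self x)) hblocks)
  filter_upwards [measure_eq_zero_iff_ae_notMem.1 hSnull] with x hx
  simp only [S, birkhoffLimsupSuperlevel, mem_ofPred_eq, not_forall, not_frequently,
    not_lt] at hx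
  obtain ⟨q, hqr, hq⟩ := hx
  exact hq.mono fun n hn ↦ hn.trans (mul_le_mul_of_nonneg_left hqr.le n.cast_nonneg)

theorem ae_eventually_le_birkhoffSum (hf : Ergodic f μ) (hgm : Measurable g)
    (hg : Integrable g μ) (hbdd : BddAbove (range g)) {r : ℝ} (hr : r < ∫ x, g x ∂μ) :
    ∀ᵐ x ∂μ, ∀ᶠ n in atTop, n * r ≤ birkhoffSum f g n x := by
  obtain ⟨C, hC⟩ := hbdd
  have hneg := hf.ae_eventually_birkhoffSum_le hgm.neg hg.neg
    ⟨-C, forall_mem_range.2 fun x ↦ neg_le_neg (hC (mem_range_self x))⟩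
    (r := -r) (by simpa [integral_neg] using hr)
  filter_upwards [hneg] with x hx
  filter_upwards [hx] with n hn
  rw [birkhoffSum_neg] at hn
  linarith

/-- With `s < μ(A) < (1 + γ) s`, the number of visits to `A` before time `⌊(1 + γ) n⌋ + 1`
eventually exceeds `(1 + γ) n s`, while the number before time `n` stays below it. -/
theorem ae_eventually_exists_iterate_mem (hf : Ergodic f μ) {A : Set α}
    (hA : MeasurableSet A) (hA0 : μ A ≠ 0) {γ : ℝ} (hγ : 0 < γ) :
    ∀ᵐ x ∂μ, ∀ᶠ n : ℕ in atTop, ∃ q : ℕ, (n : ℝ) ≤ q ∧ (q : ℝ) ≤ (1 + γ) * n ∧ f^[q] x ∈ A := by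
  set a := μ.real A
  have ha : 0 < a := ENNReal.toReal_pos hA0 (measure_ne_top μ A)
  set s := a * (1 + γ / 2) / (1 + γ)
  have hs : 0 < s := by positivity
  have hsa : s < a := by rw [div_lt_iff₀ (by positivity)]; nlinarith
  have hgm : Measurable (A.indicator (1 : α → ℝ)) := measurable_const.indicator hA
  have hgi : Integrable (A.indicator (1 : α → ℝ)) μ := (integrable_const 1).indicator hA
  have hint : ∫ x, A.indicator (1 : α → ℝ) x ∂μ = a := integral_indicator_one hA
  have hup := hf.ae_eventually_birkhoffSum_le hgm hgi
    ⟨0, forall_mem_range.2 (indicator_nonneg fun _ _ ↦ zero_le_one)⟩ (r := (1 + γ) * s)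
    (by rw [hint, mul_div_cancel₀ _ (by positivity)]; nlinarith)
  have hlow := hf.ae_eventually_le_birkhoffSum hgm hgi
    ⟨1, forall_mem_range.2 (indicator_le_self' fun _ _ ↦ zero_le_one)⟩ (r := s)
    (by rwa [hint])
  filter_upwards [hup, hlow] with x hxup hxlow
  set Q : ℕ → ℕ := fun n ↦ ⌊(1 + γ) * n⌋₊
  have hnQ : ∀ n, n ≤ Q n := fun n ↦ Nat.le_floor (by nlinarith [n.cast_nonneg (α := ℝ)])
  have hQ : Tendsto (fun n ↦ Q n + 1) atTop atTop :=
    tendsto_atTop_mono (fun n ↦ (hnQ n).trans (Nat.le_succ _)) tendsto_id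
  filter_upwards [hxup, hQ.eventually hxlow] with n hn hQn
  obtain ⟨k, hk⟩ := Nat.exists_eq_add_of_le (Nat.le_add_right_of_le (hnQ n) : n ≤ Q n + 1)
  have hpos : 0 < birkhoffSum f (A.indicator (1 : α → ℝ)) k (f^[n] x) := by
    have hsplit := birkhoffSum_add f (A.indicator (1 : α → ℝ)) n k x
    have hgrowth : (1 + γ) * n * s < (Q n + 1 : ℕ) * s :=
      mul_lt_mul_of_pos_right (by push_cast; exact Nat.lt_floor_add_one _) hs
    rw [← hk] at hsplit
    linarith
  obtain ⟨j, hjk, hjA⟩ := exists_iterate_mem_of_birkhoffSum_indicator_pos hpos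
  have hjQ : j + n ≤ Q n := by omega
  refine ⟨j + n, by push_cast; linarith [(j.cast_nonneg : (0 : ℝ) ≤ j)], ?_, ?_⟩
  · exact (Nat.cast_le.2 hjQ).trans (Nat.floor_le (by positivity))
  · rwa [Function.iterate_add_apply]

theorem ae_mem_imp_eventually_exists_iterate_mem (hf : Ergodic f μ) {A : Set α}
    (hA : MeasurableSet A) {γ : ℝ} (hγ : 0 < γ) :
    ∀ᵐ x ∂μ, x ∈ A →
      ∀ᶠ n : ℕ in atTop, ∃ q : ℕ, (n : ℝ) ≤ q ∧ (q : ℝ) ≤ (1 + γ) * n ∧ f^[q] x ∈ A := by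
  by_cases hA0 : μ A = 0
  · filter_upwards [measure_eq_zero_iff_ae_notMem.1 hA0] with x hx hxA using absurd hxA hx
  · filter_upwards [hf.ae_eventually_exists_iterate_mem hA hA0 hγ] with x hx _ using hx

end Ergodic

theorem tendsto_measure_of_ae_eventually_mem {α : Type*} [MeasurableSpace α] {μ : Measure α}
    {s : ℕ → Set α} {t : Set α} (hst : ∀ n, s n ⊆ t)
    (h : ∀ᵐ x ∂μ, x ∈ t → ∀ᶠ n in atTop, x ∈ s n) :
    Tendsto (fun n ↦ μ (s n)) atTop (𝓝 (μ t)) := by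
  set u : ℕ → Set α := fun N ↦ ⋂ n ≥ N, s n
  have hus : ∀ N, u N ⊆ s N := fun N x hx ↦ mem_iInter₂.1 hx N le_rfl
  have hu : Monotone u := fun N N' hNN' x hx ↦
    mem_iInter₂.2 fun n hn ↦ mem_iInter₂.1 hx n (hNN'.trans hn)
  have hut : μ (⋃ N, u N) = μ t := by
    refine le_antisymm (measure_mono (iUnion_subset fun N ↦ (hus N).trans (hst N)))
      (measure_mono_ae ?_)
    filter_upwards [h] with x hx hxt
    obtain ⟨N, hN⟩ := eventually_atTop.1 (hx hxt)
    exact mem_iUnion.2 ⟨N, mem_iInter₂.2 hN⟩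
  have hlim := tendsto_measure_iUnion_atTop (μ := μ) hu
  rw [hut] at hlim
  exact tendsto_of_tendsto_of_tendsto_of_le_of_le hlim tendsto_const_nhds
    (fun n ↦ measure_mono (hus n)) fun n ↦ measure_mono (hst n)

variable {E : Type*} [NormedAddCommGroup E] [NormedSpace ℝ E]
  {H : Type*} [TopologicalSpace H] (I : ModelWithCorners ℝ E H)
  {M : Type*} [MetricSpace M] [ChartedSpace H M]

theorem good_returns_full_measure_general
    [CompactSpace M]
    [MeasurableSpace M] [BorelSpace M]
    (f : Equiv.Perm M)
    (μ : Measure M) [IsProbabilityMeasure μ] (hμ : Ergodic f μ)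
    (B : Set M)
    (ξ : Finset (Set M)) (hξm : ∀ A ∈ ξ, MeasurableSet A)
    (hξcov : ⋃₀ (ξ : Set (Set M)) = Set.univ)
    (φ ψ : M → ℝ) (hφ : Continuous φ) (hψ : Continuous ψ)
    (γ δ : ℝ) (hγ : 0 < γ) (hδ : 0 < δ) :
    Filter.Tendsto
      (fun n : ℕ => μ
        ({x ∈ B | ∃ q : ℕ, (n : ℝ) ≤ q ∧ (q : ℝ) ≤ (1 + γ) * n ∧
            ∃ A ∈ ξ, x ∈ A ∧ f^[q] x ∈ A} ∩
         {x ∈ B | ∀ m : ℕ, n ≤ m →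
            birkhoffSumS f ψ m x ≤ m * ((∫ y, ψ y ∂μ) + γ) ∧
            m * ((∫ y, φ y ∂μ) - δ) ≤ birkhoffSumS f φ m x}))
      Filter.atTop (nhds (μ B)) := by
  have hint : ∀ {g : M → ℝ}, Continuous g → Integrable g μ := fun hg ↦
    hg.integrable_of_hasCompactSupport (HasCompactSupport.of_compactSpace _)
  have hψ_le := hμ.ae_eventually_birkhoffSum_le hψ.measurable (hint hψ)
    (isCompact_range hψ).bddBelow (lt_add_of_pos_right _ hγ)
  have hφ_ge := hμ.ae_eventually_le_birkhoffSum hφ.measurable (hint hφ)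
    (isCompact_range hφ).bddAbove (sub_lt_self _ hδ)
  have hreturn : ∀ᵐ x ∂μ, ∀ A ∈ ξ, x ∈ A → ∀ᶠ n : ℕ in atTop,
      ∃ q : ℕ, (n : ℝ) ≤ q ∧ (q : ℝ) ≤ (1 + γ) * n ∧ f^[q] x ∈ A :=
    (eventually_all_finset ξ).2 fun A hA ↦
      hμ.ae_mem_imp_eventually_exists_iterate_mem (hξm A hA) hγ
  refine tendsto_measure_of_ae_eventually_mem (fun n x hx ↦ hx.1.1) ?_
  filter_upwards [hψ_le, hφ_ge, hreturn] with x hxψ hxφ hxreturn hxB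
  obtain ⟨A, hA, hxA⟩ := mem_sUnion.1 (hξcov ▸ mem_univ x)
  filter_upwards [hxreturn A hA hxA, eventually_forall_ge_atTop.2 (hxψ.and hxφ)]
    with n ⟨q, hnq, hqn, hqA⟩ hbirkhoff
  exact ⟨⟨hxB, q, hnq, hqn, A, hA, hxA, hqA⟩, hxB, hbirkhoff⟩

/-- Lemma 3.4. Let `f` be a `C¹` diffeomorphism of a compact Riemannian
manifold, `μ` ergodic, `B` measurable with `μ(B) > 0`, and `ξ` a finite Borel partition of `M`
refining `{B, M∖B}`. For continuous `φ, ψ` and `γ, δ > 0`, setting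
`Λ₁ⁿ = {x ∈ B : f^q(x) ∈ ξ(x) for some integer q ∈ [n,(1+γ)n]}` and
`Λ₂ⁿ = {x ∈ B : S_mψ(x) ≤ m(∫ψ dμ + γ) and S_mφ(x) ≥ m(∫φ dμ - δ) for all m ≥ n}`,
one has `lim_n μ(Λ₁ⁿ ∩ Λ₂ⁿ) = μ(B)`. -/
theorem good_returns_full_measure
    [FiniteDimensional ℝ E] [I.Boundaryless] [CompactSpace M] [IsManifold I (⊤ : ℕ∞) M]
    [MeasurableSpace M] [BorelSpace M]
    (f : Equiv.Perm M) (hf : IsC1Diffeo I f)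
    (μ : Measure M) [IsProbabilityMeasure μ] (hμ : Ergodic f μ)
    (B : Set M) (hBm : MeasurableSet B) (hB : 0 < μ B)
    (ξ : Finset (Set M)) (hξm : ∀ A ∈ ξ, MeasurableSet A)
    (hξcov : ⋃₀ (ξ : Set (Set M)) = Set.univ)
    (hξdisj : (ξ : Set (Set M)).PairwiseDisjoint id)
    (hξref : ∀ A ∈ ξ, A ⊆ B ∨ A ⊆ Bᶜ)
    (φ ψ : M → ℝ) (hφ : Continuous φ) (hψ : Continuous ψ)
    (γ δ : ℝ) (hγ : 0 < γ) (hδ : 0 < δ) :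
    Filter.Tendsto
      (fun n : ℕ => μ
        ({x ∈ B | ∃ q : ℕ, (n : ℝ) ≤ q ∧ (q : ℝ) ≤ (1 + γ) * n ∧
            ∃ A ∈ ξ, x ∈ A ∧ f^[q] x ∈ A} ∩
         {x ∈ B | ∀ m : ℕ, n ≤ m →
            birkhoffSumS f ψ m x ≤ m * ((∫ y, ψ y ∂μ) + γ) ∧
            m * ((∫ y, φ y ∂μ) - δ) ≤ birkhoffSumS f φ m x}))
      Filter.atTop (nhds (μ B)) :=
  good_returns_full_measure_general f μ hμ B ξ hξm hξcov φ ψ hφ hψ γ δ hγ hδ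

end
end

section
/- Let f: M → M be a C¹ diffeomorphism of a compact Riemannian manifold, μ an ergodic f-invariant Borel probability measure, B ⊆ M measurable with μ(B) > 0, ξ a finite Borel partition of M refining {B, M∖B}, and γ > 0. Then for μ-almost every x ∈ B, for all sufficiently large n ∈ ℕ there exists an integer q ∈ [n, (1+γ)n] with f^q(x) ∈ ξ(x), where ξ(x) is the element of ξ containing x; consequently, with Λ₁ⁿ = {x ∈ B : f^q(x) ∈ ξ(x) for some integer q ∈ [n,(1+γ)n]}, one has lim_{n→∞} μ(Λ₁ⁿ) = μ(B). -/
/-!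
Let `D_L ⊆ A` be the set of points of `A` that do not return to `A` at the times `1, …, L`.
The preimage under `T` of the set of points avoiding `A` up to time `L` splits into `D_L` and the
set of points avoiding `A` up to time `L + 1`, so the measures telescope and `∑_L μ D_L ≤ 1`
(Kac's inequality). Hence `∑_p μ D_{p/K} ≤ K`, and by Borel–Cantelli almost every orbit has
`T^[p] x ∉ D_{p/K}` for all large `p`: every late return at a time `p` is followed by another one
within time `p / K`. Poincaré recurrence provides late returns, so for large `n` every window
`[n, n + n / K]` contains a return, and `n / K ≤ γ n` for `K = ⌈γ⁻¹⌉₊`. The measure statement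
follows by monotone convergence along the sets `{x ∈ B | ∀ m ≥ n, x ∈ Λ₁ᵐ}`.
-/

open MeasureTheory Filter Set Manifold ProbabilityTheory

noncomputable section

variable {E : Type*} [NormedAddCommGroup E] [NormedSpace ℝ E]
  {H : Type*} [TopologicalSpace H] (I : ModelWithCorners ℝ E H)
  {M : Type*} [MetricSpace M] [ChartedSpace H M]

namespace Nat

theorem eventually_exists_le_le_add_of_eventually_gap_le {R : ℕ → Prop} {g : ℕ → ℕ}
    (hg : Monotone g) (hR : ∃ᶠ p in atTop, R p)
    (hgap : ∀ᶠ p in atTop, R p → ∃ r, p < r ∧ r ≤ p + g p ∧ R r) :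
    ∀ᶠ n in atTop, ∃ q, n ≤ q ∧ q ≤ n + g n ∧ R q := by
  classical
  obtain ⟨P, hP⟩ := eventually_atTop.1 hgap
  obtain ⟨p₀, hPp₀, hp₀⟩ := frequently_atTop.1 hR P
  filter_upwards [eventually_ge_atTop p₀] with n hn
  -- the last return up to time `n` is followed by a return beyond `n`, at most `g n` later
  set p := Nat.findGreatest R n
  have hp₀p : p₀ ≤ p := Nat.le_findGreatest hn hp₀
  obtain ⟨r, hpr, hrp, hr⟩ := hP p (hPp₀.trans hp₀p) (Nat.findGreatest_spec hn hp₀)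
  have hnr : n < r := not_le.1 fun hrn => Nat.findGreatest_is_greatest hpr hrn hr
  exact ⟨r, hnr.le, hrp.trans (add_le_add (Nat.findGreatest_le n) (hg (Nat.findGreatest_le n))),
    hr⟩

end Nat

section Returns

variable {α : Type*} {T : α → α} {A : Set α}

def avoiding (T : α → α) (A : Set α) (L : ℕ) : Set α :=
  ⋂ j < L, T^[j] ⁻¹' Aᶜ

/-- Points of `A` that do not come back to `A` at the times `1, …, L`. -/
def noReturnWithin (T : α → α) (A : Set α) (L : ℕ) : Set α :=
  A ∩ T ⁻¹' avoiding T A L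

@[simp]
theorem avoiding_zero (T : α → α) (A : Set α) : avoiding T A 0 = univ := by
  simp [avoiding]

theorem avoiding_succ (T : α → α) (A : Set α) (L : ℕ) :
    avoiding T A (L + 1) = Aᶜ ∩ T ⁻¹' avoiding T A L := by
  ext y
  simp only [avoiding, mem_iInter, mem_inter_iff, mem_preimage, mem_compl_iff]
  rw [Nat.forall_lt_succ_left']
  simp only [Function.iterate_succ_apply, Function.iterate_zero_apply]

variable [MeasurableSpace α] {μ : Measure α}

theorem measurableSet_avoiding (hT : Measurable T) (hA : MeasurableSet A) (L : ℕ) :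
    MeasurableSet (avoiding T A L) :=
  MeasurableSet.iInter fun j => MeasurableSet.iInter fun _ => hT.iterate j hA.compl

theorem tendsto_measure_setOf_of_ae_eventually {B : Set α} {P : ℕ → α → Prop}
    (h : ∀ᵐ x ∂μ, x ∈ B → ∀ᶠ n in atTop, P n x) :
    Tendsto (fun n => μ {x ∈ B | P n x}) atTop (nhds (μ B)) := by
  set C : ℕ → Set α := fun n => {x ∈ B | ∀ m ≥ n, P m x}
  have hCmono : Monotone C := fun a b hab x hx => ⟨hx.1, fun m hm => hx.2 m (hab.trans hm)⟩
  have hCunion : μ (⋃ n, C n) = μ B := by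
    refine le_antisymm (measure_mono (iUnion_subset fun n x hx => hx.1)) (measure_mono_ae ?_)
    filter_upwards [h] with x hx hxB
    obtain ⟨n, hn⟩ := eventually_atTop.1 (hx hxB)
    exact mem_iUnion.2 ⟨n, hxB, hn⟩
  exact tendsto_of_tendsto_of_tendsto_of_le_of_le
    (hCunion ▸ tendsto_measure_iUnion_atTop hCmono) tendsto_const_nhds
    (fun n => measure_mono fun x hx => ⟨hx.1, hx.2 n le_rfl⟩)
    (fun n => measure_mono fun x hx => hx.1)

namespace MeasureTheory.MeasurePreserving

theorem sum_measure_noReturnWithin_add_measure_avoiding (hT : MeasurePreserving T μ μ)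
    (hA : MeasurableSet A) (n : ℕ) :
    ∑ L ∈ Finset.range n, μ (noReturnWithin T A L) + μ (avoiding T A n) = μ univ := by
  induction n with
  | zero => simp
  | succ n ih =>
    have hsplit : μ (noReturnWithin T A n) + μ (avoiding T A (n + 1)) = μ (avoiding T A n) := by
      rw [noReturnWithin, avoiding_succ, inter_comm A, inter_comm Aᶜ, ← sdiff_eq,
        measure_inter_add_sdiff _ hA,
        hT.measure_preimage (measurableSet_avoiding hT.measurable hA n).nullMeasurableSet]
    rw [Finset.sum_range_succ, add_assoc, hsplit, ih]

/-- Kac's inequality: the sum is `∫_A τ_A dμ`, where `τ_A` is the first return time to `A`. -/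
theorem tsum_measure_noReturnWithin_le (hT : MeasurePreserving T μ μ)
    (hA : MeasurableSet A) : ∑' L, μ (noReturnWithin T A L) ≤ μ univ :=
  ENNReal.tsum_le_of_sum_range_le fun n =>
    (hT.sum_measure_noReturnWithin_add_measure_avoiding hA n).symm ▸ le_self_add

theorem tsum_measure_noReturnWithin_div_le (hT : MeasurePreserving T μ μ)
    (hA : MeasurableSet A) (K : ℕ) [NeZero K] :
    ∑' p, μ (noReturnWithin T A (p / K)) ≤ K * μ univ := by
  have hdiv : ∀ q : ℕ × Fin K, ((Nat.divModEquiv K).symm q) / K = q.1 := fun q =>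
    congrArg Prod.fst ((Nat.divModEquiv K).apply_symm_apply q)
  calc ∑' p, μ (noReturnWithin T A (p / K))
      = ∑' q : ℕ × Fin K, μ (noReturnWithin T A q.1) := by
        rw [← (Nat.divModEquiv K).symm.tsum_eq]
        simp only [hdiv]
    _ = K * ∑' L, μ (noReturnWithin T A L) := by
        rw [ENNReal.tsum_prod', ← ENNReal.tsum_mul_left]
        simp
    _ ≤ K * μ univ := by gcongr; exact hT.tsum_measure_noReturnWithin_le hA

theorem ae_eventually_iterate_notMem_noReturnWithin_div [IsFiniteMeasure μ]
    (hT : MeasurePreserving T μ μ) (hA : MeasurableSet A) (K : ℕ) [NeZero K] :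
    ∀ᵐ x ∂μ, ∀ᶠ p in atTop, T^[p] x ∉ noReturnWithin T A (p / K) := by
  have hmeas : ∀ p, MeasurableSet (noReturnWithin T A (p / K)) := fun p =>
    hA.inter (hT.measurable (measurableSet_avoiding hT.measurable hA _))
  refine ae_eventually_notMem (s := fun p => T^[p] ⁻¹' noReturnWithin T A (p / K)) ?_
  simp only [fun p => (hT.iterate p).measure_preimage (hmeas p).nullMeasurableSet]
  exact ne_top_of_le_ne_top (ENNReal.mul_ne_top (ENNReal.natCast_ne_top K) (measure_ne_top μ _))
    (hT.tsum_measure_noReturnWithin_div_le hA K)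

theorem ae_mem_imp_eventually_exists_iterate_mem_le_add_div [IsFiniteMeasure μ]
    (hT : MeasurePreserving T μ μ) (hA : MeasurableSet A) (K : ℕ) [NeZero K] :
    ∀ᵐ x ∂μ, x ∈ A → ∀ᶠ n in atTop, ∃ q, n ≤ q ∧ q ≤ n + n / K ∧ T^[q] x ∈ A := by
  filter_upwards [hT.conservative.ae_mem_imp_frequently_image_mem hA.nullMeasurableSet,
    hT.ae_eventually_iterate_notMem_noReturnWithin_div hA K] with x hrec hgap hxA
  refine Nat.eventually_exists_le_le_add_of_eventually_gap_le
    (fun _ _ h => Nat.div_le_div_right h) (hrec hxA) ?_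
  filter_upwards [hgap] with p hp hpA
  obtain ⟨j, hj, hjA⟩ : ∃ j < p / K, T^[j] (T (T^[p] x)) ∈ A := by
    by_contra! hno
    exact hp ⟨hpA, by simpa [avoiding] using hno⟩
  refine ⟨j + 1 + p, by omega, by omega, ?_⟩
  rwa [Function.iterate_add_apply, Function.iterate_succ_apply]

end MeasureTheory.MeasurePreserving

end Returns

theorem returns_in_window_ae_and_full_measure_general
    [MeasurableSpace M]
    (f : Equiv.Perm M)
    (μ : Measure M) [IsProbabilityMeasure μ] (hμ : Ergodic f μ)
    (B : Set M)
    (ξ : Finset (Set M)) (hξm : ∀ A ∈ ξ, MeasurableSet A)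
    (hξcov : ⋃₀ (ξ : Set (Set M)) = Set.univ)
    (γ : ℝ) (hγ : 0 < γ) :
    (∀ᵐ x ∂μ, x ∈ B →
      ∀ᶠ n : ℕ in Filter.atTop, ∃ q : ℕ, (n : ℝ) ≤ q ∧ (q : ℝ) ≤ (1 + γ) * n ∧
        ∃ A ∈ ξ, x ∈ A ∧ f^[q] x ∈ A) ∧
    Filter.Tendsto
      (fun n : ℕ => μ {x ∈ B | ∃ q : ℕ, (n : ℝ) ≤ q ∧ (q : ℝ) ≤ (1 + γ) * n ∧
          ∃ A ∈ ξ, x ∈ A ∧ f^[q] x ∈ A})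
      Filter.atTop (nhds (μ B)) := by
  set K := ⌈γ⁻¹⌉₊
  have : NeZero K := ⟨(Nat.ceil_pos.2 (inv_pos.2 hγ)).ne'⟩
  have hdivK : ∀ n : ℕ, ((n / K : ℕ) : ℝ) ≤ γ * n := fun n =>
    calc ((n / K : ℕ) : ℝ) ≤ n / K := Nat.cast_div_le
      _ ≤ n / γ⁻¹ := by gcongr; exact Nat.le_ceil _
      _ = γ * n := by rw [div_inv_eq_mul, mul_comm]
  have hreturn : ∀ᵐ x ∂μ, ∀ A ∈ ξ, x ∈ A →
      ∀ᶠ n in atTop, ∃ q, n ≤ q ∧ q ≤ n + n / K ∧ f^[q] x ∈ A :=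
    (eventually_all_finset ξ).2 fun A hA =>
      hμ.toMeasurePreserving.ae_mem_imp_eventually_exists_iterate_mem_le_add_div (hξm A hA) K
  have hwindow : ∀ᵐ x ∂μ, x ∈ B →
      ∀ᶠ n : ℕ in Filter.atTop, ∃ q : ℕ, (n : ℝ) ≤ q ∧ (q : ℝ) ≤ (1 + γ) * n ∧
        ∃ A ∈ ξ, x ∈ A ∧ f^[q] x ∈ A := by
    filter_upwards [hreturn] with x hx _
    obtain ⟨A, hAξ, hxA⟩ := mem_sUnion.1 (hξcov ▸ mem_univ x)
    filter_upwards [hx A hAξ hxA] with n ⟨q, hnq, hqn, hq⟩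
    refine ⟨q, by exact_mod_cast hnq, ?_, A, hAξ, hxA, hq⟩
    calc (q : ℝ) ≤ n + (n / K : ℕ) := by exact_mod_cast hqn
      _ ≤ (1 + γ) * n := by linarith [hdivK n]
  exact ⟨hwindow, tendsto_measure_setOf_of_ae_eventually hwindow⟩

/-- Let `f` be a `C¹` diffeomorphism of a compact Riemannian manifold, `μ`
ergodic, `B` measurable with `μ(B) > 0`, `ξ` a finite Borel partition of `M` refining
`{B, M∖B}` and `γ > 0`. Then for `μ`-a.e. `x ∈ B`, for all sufficiently large `n` there is an
integer `q ∈ [n, (1+γ)n]` with `f^q(x) ∈ ξ(x)`; consequently, with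
`Λ₁ⁿ = {x ∈ B : f^q(x) ∈ ξ(x) for some integer q ∈ [n,(1+γ)n]}`,
`lim_n μ(Λ₁ⁿ) = μ(B)`. -/
theorem returns_in_window_ae_and_full_measure
    [FiniteDimensional ℝ E] [I.Boundaryless] [CompactSpace M] [IsManifold I (⊤ : ℕ∞) M]
    [MeasurableSpace M] [BorelSpace M]
    (f : Equiv.Perm M) (hf : IsC1Diffeo I f)
    (μ : Measure M) [IsProbabilityMeasure μ] (hμ : Ergodic f μ)
    (B : Set M) (hBm : MeasurableSet B) (hB : 0 < μ B)
    (ξ : Finset (Set M)) (hξm : ∀ A ∈ ξ, MeasurableSet A)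
    (hξcov : ⋃₀ (ξ : Set (Set M)) = Set.univ)
    (hξdisj : (ξ : Set (Set M)).PairwiseDisjoint id)
    (hξref : ∀ A ∈ ξ, A ⊆ B ∨ A ⊆ Bᶜ)
    (γ : ℝ) (hγ : 0 < γ) :
    (∀ᵐ x ∂μ, x ∈ B →
      ∀ᶠ n : ℕ in Filter.atTop, ∃ q : ℕ, (n : ℝ) ≤ q ∧ (q : ℝ) ≤ (1 + γ) * n ∧
        ∃ A ∈ ξ, x ∈ A ∧ f^[q] x ∈ A) ∧
    Filter.Tendsto
      (fun n : ℕ => μ {x ∈ B | ∃ q : ℕ, (n : ℝ) ≤ q ∧ (q : ℝ) ≤ (1 + γ) * n ∧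
          ∃ A ∈ ξ, x ∈ A ∧ f^[q] x ∈ A})
      Filter.atTop (nhds (μ B)) :=
  returns_in_window_ae_and_full_measure_general f μ hμ B ξ hξm hξcov γ hγ
end
end
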